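/- In the discrimination setting, for every discrimination level δ ∈ (0,1) there exists a unique partiality level p ∈ [0,1) with I(p, δ) = 0, namely p̂(δ) := δ·(1/√(1+3δ²) − 1/2), and p̂(δ) > 0. Moreover p̂ is continuous on (0,1) and non-monotone: with δ̄ := √((2^{2/3} − 1)/3) ∈ (0,1), p̂ is strictly increasing on (0, δ̄) and strictly decreasing on (δ̄, 1). -/

import Mathlib

noncomputable section

/-! Discrimination setting (Section 5.2 of the paper): `K = 2`, prior means `0`,
prior variances `Σ⁰₁ = Σ⁰₂ = 1`, budget `T = 1`.  For discrimination level
`δ ∈ (0,1)` the politician's weights are `((1+δ)/2, (1−δ)/2)`; for partiality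
level `p ∈ [0,1)` the advisor's weights are `((1−p)/2, (1+p)/2)`.

* `ah1 p δ, ah2 p δ` are the auxiliary weights `α̂₁(p,δ), α̂₂(p,δ)`.
* `tau2aux p δ` is `τ₂^aux(p,δ)` and `tau2star p δ = min{τ₂^aux(p,δ), 1}` is the
  advisor's equilibrium allocation of tests to group 2 (group 1 gets the rest).
* `omega τ₂ δ` is utilitarian welfare as a function of the allocation, and
  `W p δ = ω(τ₂*(p,δ), δ)` is equilibrium welfare.
* `Dlt τ₂ δ` is the difference of the two groups' ex ante expected utilities and
  `Ineq p δ = |Δ(τ₂*(p,δ), δ)|` is equilibrium inequality. -/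

/-- Auxiliary weight `α̂₁(p,δ)`. -/
def ah1 (p δ : ℝ) : ℝ :=
  if p < (1 - δ) / 2 then (1 / 2) * Real.sqrt ((1 + δ) * (1 - 2 * p - δ)) else 0

/-- Auxiliary weight `α̂₂(p,δ)`. -/
def ah2 (p δ : ℝ) : ℝ := (1 / 2) * Real.sqrt ((1 - δ) * (1 + 2 * p + δ))

/-- `τ₂^aux(p,δ)`. -/
def tau2aux (p δ : ℝ) : ℝ := (2 * ah2 p δ - ah1 p δ) / (ah1 p δ + ah2 p δ)

/-- The advisor's equilibrium allocation of tests to group 2, `τ₂*(p,δ)`. -/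
def tau2star (p δ : ℝ) : ℝ := min (tau2aux p δ) 1

/-- Utilitarian welfare `ω(τ₂, δ)` from splitting the budget as `(1−τ₂, τ₂)`. -/
def omega (τ2 δ : ℝ) : ℝ :=
  -3 - δ ^ 2 + ((1 + δ) ^ 2 / 2 + (1 + δ) * (1 - τ2)) / (2 - τ2)
    + ((1 - δ) ^ 2 / 2 + (1 - δ) * τ2) / (1 + τ2)

/-- Equilibrium welfare `W(p,δ)`. -/
def W (p δ : ℝ) : ℝ := omega (tau2star p δ) δ

/-- Difference `Δ(τ₂,δ)` of the two groups' ex ante expected utilities. -/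
def Dlt (τ2 δ : ℝ) : ℝ :=
  (1 + δ) * (1 - τ2) / (2 - τ2) - (1 - δ) * τ2 / (1 + τ2)

/-- Equilibrium inequality `I(p,δ)`. -/
def Ineq (p δ : ℝ) : ℝ := |Dlt (tau2star p δ) δ|

/-!
`Δ(τ, δ) = 0` on `(-1, 2)` exactly when `δ τ² + (1 - δ) τ - (1 + δ) / 2 = 0`, whose only root
there is `τ̂(δ) = (δ - 1 + √(1 + 3δ²)) / (2δ) ∈ (0, 1)`. If `p ≥ (1 - δ) / 2` then `α̂₁ = 0` and
the advisor gives group 2 everything, so `τ₂* = 1 ≠ τ̂(δ)`. Otherwise `τ₂* = τ̂(δ)` means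
`α̂₁ (1 + τ̂) = α̂₂ (2 - τ̂)`; squared, this is affine in `p`, and `p̂(δ)` solves it.
Finally `p̂'(δ) = (1 + 3δ²)^(-3/2) - 1/2` changes sign exactly where `(1 + 3δ²)³ = 4`,
i.e. at `δ̄`.
-/

open Real Set

/-- The positive root of `δ τ² + (1 - δ) τ - (1 + δ) / 2`: the allocation at which `Dlt`
vanishes. -/
def tauHat (δ : ℝ) : ℝ := (δ - 1 + √(1 + 3 * δ ^ 2)) / (2 * δ)

def pHat (δ : ℝ) : ℝ := δ * (1 / √(1 + 3 * δ ^ 2) - 1 / 2)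

def deltaBar : ℝ := √(((2 : ℝ) ^ ((2 : ℝ) / 3) - 1) / 3)

lemma sq_sqrt_one_add_three_mul_sq (δ : ℝ) : √(1 + 3 * δ ^ 2) ^ 2 = 1 + 3 * δ ^ 2 :=
  sq_sqrt (by positivity)

lemma Dlt_eq_zero_iff {τ δ : ℝ} (h1 : -1 < τ) (h2 : τ < 2) :
    Dlt τ δ = 0 ↔ δ * (τ * τ) + (1 - δ) * τ + -(1 + δ) / 2 = 0 := by
  rw [Dlt, div_sub_div _ _ (by linarith) (by linarith), div_eq_zero_iff,
    or_iff_left (mul_pos (by linarith) (by linarith)).ne']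
  constructor
  · intro h; linear_combination (-1 / 2 : ℝ) * h
  · intro h; linear_combination (-2 : ℝ) * h

lemma Dlt_eq_zero_iff_eq_tauHat {τ δ : ℝ} (hδ : 0 < δ) (hδ1 : δ ≤ 1) (h1 : -1 < τ)
    (h2 : τ < 2) :
    Dlt τ δ = 0 ↔ τ = tauHat δ := by
  have hs := sq_sqrt_one_add_three_mul_sq δ
  have hdiscr : discrim δ (1 - δ) (-(1 + δ) / 2) = √(1 + 3 * δ ^ 2) * √(1 + 3 * δ ^ 2) := by
    rw [discrim]; linear_combination -hs
  rw [Dlt_eq_zero_iff h1 h2, quadratic_eq_zero_iff hδ.ne' hdiscr, tauHat, neg_sub,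
    or_iff_left]
  -- the other root, `(δ - 1 - √(1 + 3δ²)) / (2δ)`, is at most `-1`
  have h3δ : 3 * δ - 1 ≤ √(1 + 3 * δ ^ 2) := by
    nlinarith [sqrt_nonneg (1 + 3 * δ ^ 2), mul_nonneg hδ.le (sub_nonneg.2 hδ1)]
  rw [eq_div_iff (by positivity)]
  nlinarith

lemma tauHat_pos {δ : ℝ} (hδ : 0 < δ) : 0 < tauHat δ := by
  have hs := sq_sqrt_one_add_three_mul_sq δ
  exact div_pos (by nlinarith [sqrt_nonneg (1 + 3 * δ ^ 2)]) (by positivity)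

lemma tauHat_lt_one {δ : ℝ} (hδ : 0 < δ) (hδ1 : δ < 1) : tauHat δ < 1 := by
  have hs := sq_sqrt_one_add_three_mul_sq δ
  rw [tauHat, div_lt_one (by positivity)]
  nlinarith [sqrt_nonneg (1 + 3 * δ ^ 2)]

lemma ah1_nonneg (p δ : ℝ) : 0 ≤ ah1 p δ := by
  unfold ah1; split_ifs <;> positivity

lemma ah2_pos {p δ : ℝ} (hδ : δ < 1) (hp : -(1 + δ) / 2 < p) : 0 < ah2 p δ :=
  mul_pos one_half_pos (sqrt_pos.2 (mul_pos (by linarith) (by linarith)))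

lemma ah1_sq {p δ : ℝ} (hδ : -1 ≤ δ) (hp : p < (1 - δ) / 2) :
    ah1 p δ ^ 2 = (1 + δ) * (1 - 2 * p - δ) / 4 := by
  rw [ah1, if_pos hp, mul_pow, sq_sqrt (mul_nonneg (by linarith) (by linarith))]
  ring

lemma ah2_sq {p δ : ℝ} (hδ : δ ≤ 1) (hp : -(1 + δ) / 2 ≤ p) :
    ah2 p δ ^ 2 = (1 - δ) * (1 + 2 * p + δ) / 4 := by
  rw [ah2, mul_pow, sq_sqrt (mul_nonneg (by linarith) (by linarith))]
  ring

lemma tau2aux_eq_iff {p δ τ : ℝ} (hb : 0 < ah2 p δ) :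
    tau2aux p δ = τ ↔ ah1 p δ * (1 + τ) = ah2 p δ * (2 - τ) := by
  rw [tau2aux, div_eq_iff (add_pos_of_nonneg_of_pos (ah1_nonneg p δ) hb).ne']
  constructor <;> intro h <;> linarith

lemma neg_one_lt_tau2star {p δ : ℝ} (hb : 0 < ah2 p δ) : -1 < tau2star p δ := by
  have ha := ah1_nonneg p δ
  refine lt_min ?_ (by norm_num)
  rw [tau2aux, lt_div_iff₀ (by linarith)]
  linarith

lemma tau2star_eq_one_of_le {p δ : ℝ} (hb : 0 < ah2 p δ) (hp : (1 - δ) / 2 ≤ p) :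
    tau2star p δ = 1 := by
  rw [tau2star, tau2aux, ah1, if_neg hp.not_gt, sub_zero, zero_add, mul_div_assoc,
    div_self hb.ne']
  norm_num

lemma tau2star_eq_iff {p δ τ : ℝ} (hδ : -1 < δ) (hδ1 : δ < 1) (hp : -(1 + δ) / 2 < p)
    (hp1 : p < (1 - δ) / 2) (hτ : -1 < τ) (hτ1 : τ < 1) :
    tau2star p δ = τ ↔ (1 + δ) * (1 - 2 * p - δ) * (1 + τ) ^ 2
      = (1 - δ) * (1 + 2 * p + δ) * (2 - τ) ^ 2 := by
  have hb := ah2_pos hδ1 hp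
  have hstar : tau2star p δ = τ ↔ tau2aux p δ = τ := by
    rw [tau2star, min_eq_iff]
    constructor
    · rintro (⟨h, -⟩ | ⟨h, -⟩)
      · exact h
      · linarith
    · intro h
      exact Or.inl ⟨h, by linarith⟩
  rw [hstar, tau2aux_eq_iff hb, ← sq_eq_sq₀ (mul_nonneg (ah1_nonneg p δ) (by linarith))
    (mul_nonneg hb.le (by linarith)), mul_pow, mul_pow, ah1_sq hδ.le hp1, ah2_sq hδ1.le hp.le]
  constructor <;> intro h <;> linarith

lemma pHat_pos {δ : ℝ} (hδ : 0 < δ) (hδ1 : δ < 1) : 0 < pHat δ := by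
  have hs := sq_sqrt_one_add_three_mul_sq δ
  have hs0 : 0 < √(1 + 3 * δ ^ 2) := sqrt_pos.2 (by positivity)
  refine mul_pos hδ (sub_pos.2 (one_div_lt_one_div_of_lt hs0 ?_))
  nlinarith

lemma pHat_lt_one_sub_div_two {δ : ℝ} (hδ : 0 < δ) (hδ1 : δ < 1) :
    pHat δ < (1 - δ) / 2 := by
  have hs := sq_sqrt_one_add_three_mul_sq δ
  have hs0 : 0 < √(1 + 3 * δ ^ 2) := sqrt_pos.2 (by positivity)
  have h2δ : 2 * δ < √(1 + 3 * δ ^ 2) := by nlinarith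
  have : δ / √(1 + 3 * δ ^ 2) < 1 / 2 := by rw [div_lt_iff₀ hs0]; linarith
  rw [pHat, mul_sub, mul_one_div]
  linarith

lemma pHat_balance {δ : ℝ} (hδ : 0 < δ) :
    (1 + δ) * (1 - 2 * pHat δ - δ) * (1 + tauHat δ) ^ 2
      = (1 - δ) * (1 + 2 * pHat δ + δ) * (2 - tauHat δ) ^ 2 := by
  have hs := sq_sqrt_one_add_three_mul_sq δ
  have hs0 : 0 < √(1 + 3 * δ ^ 2) := sqrt_pos.2 (by positivity)
  rw [pHat, tauHat]
  set s := √(1 + 3 * δ ^ 2)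
  clear_value s
  field_simp
  linear_combination (2 * δ * s + 4 * δ) * hs

lemma tau2star_eq_tauHat_iff {p δ : ℝ} (hδ : 0 < δ) (hδ1 : δ < 1) (hp : -(1 + δ) / 2 < p)
    (hp1 : p < (1 - δ) / 2) : tau2star p δ = tauHat δ ↔ p = pHat δ := by
  have hτ := tauHat_pos hδ
  rw [tau2star_eq_iff (by linarith) hδ1 hp hp1 (by linarith) (tauHat_lt_one hδ hδ1)]
  constructor
  · intro h
    -- the squared balance condition is affine in `p` with nonzero slope
    have hslope : 0 < (1 + δ) * (1 + tauHat δ) ^ 2 + (1 - δ) * (2 - tauHat δ) ^ 2 := by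
      have : 0 < (1 + δ) * (1 + tauHat δ) ^ 2 := mul_pos (by linarith) (by positivity)
      nlinarith [mul_nonneg (sub_nonneg.2 hδ1.le) (sq_nonneg (2 - tauHat δ))]
    refine mul_right_cancel₀ hslope.ne' ?_
    linear_combination (-1 / 2 : ℝ) * (h - pHat_balance hδ)
  · rintro rfl
    exact pHat_balance hδ

lemma Ineq_eq_zero_iff {p δ : ℝ} (hδ : 0 < δ) (hδ1 : δ < 1) (hp : -(1 + δ) / 2 < p) :
    Ineq p δ = 0 ↔ p = pHat δ := by
  have hb := ah2_pos hδ1 hp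
  have hτ : tau2star p δ ≤ 1 := min_le_right _ _
  rw [Ineq, abs_eq_zero, Dlt_eq_zero_iff_eq_tauHat hδ hδ1.le (neg_one_lt_tau2star hb)
    (by linarith)]
  rcases lt_or_ge p ((1 - δ) / 2) with hp1 | hp1
  · exact tau2star_eq_tauHat_iff hδ hδ1 hp hp1
  · rw [tau2star_eq_one_of_le hb hp1]
    exact iff_of_false (tauHat_lt_one hδ hδ1).ne'
      ((pHat_lt_one_sub_div_two hδ hδ1).trans_le hp1).ne'

lemma hasDerivAt_pHat (x : ℝ) :
    HasDerivAt pHat (1 / √(1 + 3 * x ^ 2) ^ 3 - 1 / 2) x := by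
  have hu : 0 < 1 + 3 * x ^ 2 := by positivity
  have hs0 : 0 < √(1 + 3 * x ^ 2) := sqrt_pos.2 hu
  have hs := sq_sqrt_one_add_three_mul_sq x
  have hpoly : HasDerivAt (fun y : ℝ => 1 + 3 * y ^ 2) (6 * x) x :=
    (((hasDerivAt_pow 2 x).const_mul 3).const_add 1).congr_deriv (by push_cast; ring)
  have hinv : HasDerivAt (fun y : ℝ => (√(1 + 3 * y ^ 2))⁻¹)
      (-(6 * x / (2 * √(1 + 3 * x ^ 2))) / √(1 + 3 * x ^ 2) ^ 2) x :=
    (hpoly.sqrt hu.ne').inv hs0.ne'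
  have hfun : pHat = fun y : ℝ => y * ((√(1 + 3 * y ^ 2))⁻¹ - 1 / 2) := by
    funext y; rw [pHat, one_div]
  rw [hfun]
  refine ((hasDerivAt_id' x).mul (hinv.sub_const (1 / 2))).congr_deriv ?_
  field_simp
  linear_combination 2 * hs

lemma continuous_pHat : Continuous pHat :=
  continuous_iff_continuousAt.2 fun x => (hasDerivAt_pHat x).continuousAt

lemma strictMonoOn_sqrt_one_add_three_mul_sq_pow_three :
    StrictMonoOn (fun x : ℝ => √(1 + 3 * x ^ 2) ^ 3) (Ici 0) := by
  intro x hx y _ hxy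
  have hsq : x ^ 2 < y ^ 2 := pow_lt_pow_left₀ hxy hx two_ne_zero
  exact pow_lt_pow_left₀ (sqrt_lt_sqrt (by positivity) (by linarith)) (sqrt_nonneg _)
    three_ne_zero

lemma sqrt_one_add_three_mul_deltaBar_sq_pow_three : √(1 + 3 * deltaBar ^ 2) ^ 3 = 2 := by
  have h1 : (1 : ℝ) ≤ (2 : ℝ) ^ ((2 : ℝ) / 3) := one_le_rpow (by norm_num) (by norm_num)
  have hbar : 1 + 3 * deltaBar ^ 2 = (2 : ℝ) ^ ((2 : ℝ) / 3) := by
    rw [deltaBar, sq_sqrt (by linarith)]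
    ring
  rw [hbar, sqrt_eq_rpow, ← rpow_natCast, ← rpow_mul zero_le_two, ← rpow_mul zero_le_two]
  norm_num

lemma deltaBar_mem_Ioo : deltaBar ∈ Ioo 0 1 := by
  have hmono := strictMonoOn_sqrt_one_add_three_mul_sq_pow_three
  have hbar := sqrt_one_add_three_mul_deltaBar_sq_pow_three
  have h0 : deltaBar ∈ Ici 0 := sqrt_nonneg _
  constructor
  · refine (hmono.lt_iff_lt (mem_Ici.2 le_rfl) h0).1 ?_
    simp [hbar]
  · refine (hmono.lt_iff_lt h0 (mem_Ici.2 zero_le_one)).1 ?_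
    rw [hbar, show (1 : ℝ) + 3 * 1 ^ 2 = 2 ^ 2 by norm_num, sqrt_sq zero_le_two]
    norm_num

lemma strictMonoOn_pHat : StrictMonoOn pHat (Icc 0 deltaBar) := by
  refine strictMonoOn_of_deriv_pos (convex_Icc 0 deltaBar) continuous_pHat.continuousOn ?_
  rw [interior_Icc]
  rintro x ⟨hx0, hx⟩
  have hlt : √(1 + 3 * x ^ 2) ^ 3 < 2 := by
    rw [← sqrt_one_add_three_mul_deltaBar_sq_pow_three]
    exact strictMonoOn_sqrt_one_add_three_mul_sq_pow_three hx0.le (sqrt_nonneg _) hx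
  rw [(hasDerivAt_pHat x).deriv, sub_pos]
  exact one_div_lt_one_div_of_lt (by positivity) hlt

lemma strictAntiOn_pHat : StrictAntiOn pHat (Ici deltaBar) := by
  refine strictAntiOn_of_deriv_neg (convex_Ici deltaBar) continuous_pHat.continuousOn ?_
  rw [interior_Ici]
  intro x (hx : deltaBar < x)
  have hlt : 2 < √(1 + 3 * x ^ 2) ^ 3 := by
    rw [← sqrt_one_add_three_mul_deltaBar_sq_pow_three]
    exact strictMonoOn_sqrt_one_add_three_mul_sq_pow_three (sqrt_nonneg _)
      ((sqrt_nonneg _).trans hx.le) hx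
  rw [(hasDerivAt_pHat x).deriv, sub_neg]
  exact one_div_lt_one_div_of_lt two_pos hlt

/-- Lemma 2 of the paper.  For every `δ ∈ (0,1)` the unique
partiality level in `[0,1)` restoring equality is
`p̂(δ) = δ(1/√(1+3δ²) − 1/2) > 0`; moreover `p̂` is continuous and non-monotone,
strictly increasing on `(0, δ̄)` and strictly decreasing on `(δ̄, 1)` with
`δ̄ = √((2^{2/3} − 1)/3)`. -/
theorem stmt_13 :
    let phat : ℝ → ℝ := fun δ => δ * (1 / Real.sqrt (1 + 3 * δ ^ 2) - 1 / 2)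
    let δbar : ℝ := Real.sqrt (((2 : ℝ) ^ ((2 : ℝ) / 3) - 1) / 3)
    (∀ δ ∈ Set.Ioo (0 : ℝ) 1,
      0 < phat δ ∧ phat δ < 1 ∧ Ineq (phat δ) δ = 0 ∧
      ∀ p ∈ Set.Ico (0 : ℝ) 1, Ineq p δ = 0 → p = phat δ) ∧
    ContinuousOn phat (Set.Ioo (0 : ℝ) 1) ∧
    δbar ∈ Set.Ioo (0 : ℝ) 1 ∧
    StrictMonoOn phat (Set.Ioo (0 : ℝ) δbar) ∧
    StrictAntiOn phat (Set.Ioo δbar 1) := by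
  intro phat δbar
  refine ⟨fun δ ⟨hδ, hδ1⟩ => ?_, continuous_pHat.continuousOn, deltaBar_mem_Ioo,
    strictMonoOn_pHat.mono Ioo_subset_Icc_self, strictAntiOn_pHat.mono fun x hx => hx.1.le⟩
  have hpos := pHat_pos hδ hδ1
  have hlt : pHat δ < 1 := (pHat_lt_one_sub_div_two hδ hδ1).trans (by linarith)
  exact ⟨hpos, hlt, (Ineq_eq_zero_iff (p := pHat δ) hδ hδ1 (by linarith)).2 rfl,
    fun p hp => (Ineq_eq_zero_iff hδ hδ1 (by linarith [hp.1])).1⟩
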